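/- Let p be an odd prime and n ≥ 2. Set Γ = {−(p−1)/2, …, −1, 0, 1, …, (p−1)/2}^n, Γ' = Γ \ {0}, and Γ* = (2π/p)Γ. Define τ(ω) = τ^d(ω) := p^{-n} Σ_{ν∈Γ} e^{-iω·ν}, and for ν ∈ Γ': t_ν(ω) := e^{-iω·ν} − 1 and t_ν^d(ω) := p^{-n} e^{-iω·ν} − p^{-2n} Σ_{μ∈Γ} e^{-iω·μ}. Then (τ, (t_ν)_{ν∈Γ'}) and (τ^d, (t_ν^d)_{ν∈Γ'}) form n-D combined biorthogonal masks with dilation p·I_n: for all ω ∈ ℝ^n and γ ∈ Γ*, \overline{τ(ω+γ)} τ^d(ω) + Σ_{ν∈Γ'} \overline{t_ν(ω+γ)} t_ν^d(ω) = 1 if γ = 0 and = 0 if γ ∈ Γ* \ {0}. -/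

import Mathlib

open scoped Real Classical

noncomputable section

/-- `eC x = e^{-ix}` as a complex number. -/
def eC (x : ℝ) : ℂ := Complex.exp (-(Complex.I * (x : ℂ)))

/-- `Γ = {-(p-1)/2, …, -1, 0, 1, …, (p-1)/2}^n`. -/
def haarGamma (n p : ℕ) : Finset (Fin n → ℤ) :=
  Fintype.piFinset fun _ => Finset.Icc (-(((p : ℤ) - 1) / 2)) (((p : ℤ) - 1) / 2)

/-- `Γ* = (2π/p)Γ`. -/
def haarGammaStar (n p : ℕ) : Finset (Fin n → ℝ) :=
  (haarGamma n p).image fun ν i => 2 * π / p * (ν i : ℝ)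

/-- The centered `n`-D Haar refinement mask with dilation `p`:
`τ(ω) = τᵈ(ω) = p^{-n} Σ_{ν∈Γ} e^{-iω·ν}`. -/
def haarTau (n p : ℕ) (ω : Fin n → ℝ) : ℂ :=
  (1 / (p : ℂ) ^ n) * ∑ ν ∈ haarGamma n p, eC (∑ i, ω i * (ν i : ℝ))

/-- The analysis wavelet masks `t_ν(ω) = e^{-iω·ν} - 1`. -/
def haarT (n p : ℕ) (ν : Fin n → ℤ) (ω : Fin n → ℝ) : ℂ :=
  eC (∑ i, ω i * (ν i : ℝ)) - 1

/-- The synthesis wavelet masks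
`t_νᵈ(ω) = p^{-n} e^{-iω·ν} - p^{-2n} Σ_{μ∈Γ} e^{-iω·μ}`. -/
def haarTd (n p : ℕ) (ν : Fin n → ℤ) (ω : Fin n → ℝ) : ℂ :=
  (1 / (p : ℂ) ^ n) * eC (∑ i, ω i * (ν i : ℝ)) -
    (1 / (p : ℂ) ^ (2 * n)) * ∑ μ ∈ haarGamma n p, eC (∑ i, ω i * (μ i : ℝ))

/-!
Write `E_ν(ω) = e^{-iω·ν}` and `K = p^{-n} = 1 / #Γ`. Since `t_0 = 0`, the wavelet sum may run over
all of `Γ`, and then the left-hand side is an instance of the ring identity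
`(K Σ a)(K Σ b) + Σ_ν (a_ν - 1)(K b_ν - K² Σ b) = K Σ_ν a_ν b_ν` (valid whenever `#Γ K = 1`)
with `a_ν = conj E_ν(ω + γ)` and `b_ν = E_ν(ω)`, so it equals `p^{-n} Σ_ν e^{iγ·ν}`.
For `γ = 2πm/p` this factors into one-dimensional sums of powers of the `p`-th roots of unity
`ζ^{m_i}` over the complete residue system `{-(p-1)/2, …, (p-1)/2}`, which vanish unless `m = 0`.
-/

open Finset

theorem Finset.mul_sum_mul_add_sum_sub_one_mul_eq {ι R : Type*} [CommRing R] (s : Finset ι) {K : R}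
    (hK : (#s : R) * K = 1) (a b : ι → R) :
    (K * ∑ i ∈ s, a i) * (K * ∑ i ∈ s, b i) +
        ∑ i ∈ s, (a i - 1) * (K * b i - K ^ 2 * ∑ j ∈ s, b j) =
      K * ∑ i ∈ s, a i * b i := by
  simp only [sub_one_mul, mul_sub, sum_sub_distrib, mul_left_comm (a _) K, ← mul_sum, ← sum_mul,
    sum_const, nsmul_eq_mul]
  linear_combination (K * ∑ i ∈ s, b i) * hK

theorem sum_Icc_neg_zpow_eq_zero {K : Type*} [Field K] {ζ : K} {h : ℕ}
    (hζ : ζ ^ (2 * h + 1) = 1) (hζ1 : ζ ≠ 1) :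
    ∑ k ∈ Icc (-(h : ℤ)) h, ζ ^ k = 0 := by
  have hζ0 : ζ ≠ 0 := by rintro rfl; simp at hζ
  have hlen : ((h : ℤ) + 1 - -(h : ℤ)).toNat = 2 * h + 1 := by omega
  rw [Int.Icc_eq_finset_map, sum_map, hlen]
  simp only [Function.Embedding.trans_apply, Nat.castEmbedding_apply, addLeftEmbedding_apply,
    zpow_add₀ hζ0, zpow_natCast, ← mul_sum, geom_sum_eq hζ1, hζ, sub_self, zero_div, mul_zero]

theorem IsPrimitiveRoot.sum_Icc_zpow_zpow {K : Type*} [Field K] {ζ : K} {h : ℕ}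
    (hζ : IsPrimitiveRoot ζ (2 * h + 1)) (m : ℤ) :
    ∑ k ∈ Icc (-(h : ℤ)) h, (ζ ^ m) ^ k =
      if ((2 * h + 1 : ℕ) : ℤ) ∣ m then (2 * h + 1 : K) else 0 := by
  split_ifs with hm
  · have h1 : ζ ^ m = 1 := (hζ.zpow_eq_one_iff_dvd m).2 hm
    simp only [h1, one_zpow, sum_const, Int.card_Icc, nsmul_eq_mul, mul_one]
    rw [show ((h : ℤ) + 1 - -(h : ℤ)).toNat = 2 * h + 1 by omega]
    push_cast; ring
  · refine sum_Icc_neg_zpow_eq_zero ?_ fun h1 => hm ((hζ.zpow_eq_one_iff_dvd m).1 h1)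
    rw [← zpow_natCast, ← zpow_mul, mul_comm, zpow_mul, zpow_natCast, hζ.pow_eq_one, one_zpow]

theorem eC_add (x y : ℝ) : eC (x + y) = eC x * eC y := by
  simp only [eC, ← Complex.exp_add]; congr 1; push_cast; ring

theorem conj_eC (x : ℝ) : (starRingEnd ℂ) (eC x) = eC (-x) := by
  simp only [eC, ← Complex.exp_conj, map_neg, map_mul, Complex.conj_I, Complex.conj_ofReal]
  congr 1; push_cast; ring

theorem conj_eC_add_mul_eC (x y : ℝ) : (starRingEnd ℂ) (eC (x + y)) * eC x = eC (-y) := by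
  rw [conj_eC, ← eC_add]; congr 1; ring

theorem haarGamma_two_mul_add_one (n h : ℕ) :
    haarGamma n (2 * h + 1) = Fintype.piFinset fun _ => Icc (-(h : ℤ)) h := by
  have hh : (((2 * h + 1 : ℕ) : ℤ) - 1) / 2 = h := by omega
  rw [haarGamma, hh]

theorem card_haarGamma_two_mul_add_one (n h : ℕ) :
    #(haarGamma n (2 * h + 1)) = (2 * h + 1) ^ n := by
  rw [haarGamma_two_mul_add_one, Fintype.card_piFinset, Int.card_Icc, prod_const, card_univ,
    Fintype.card_fin]
  congr 1; omega

theorem haar_mask_sum_eq (n h : ℕ) (ω γ : Fin n → ℝ) :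
    (starRingEnd ℂ) (haarTau n (2 * h + 1) (ω + γ)) * haarTau n (2 * h + 1) ω +
        ∑ ν ∈ (haarGamma n (2 * h + 1)).erase 0,
          (starRingEnd ℂ) (haarT n (2 * h + 1) ν (ω + γ)) * haarTd n (2 * h + 1) ν ω =
      1 / ((2 * h + 1 : ℕ) : ℂ) ^ n * ∑ ν ∈ haarGamma n (2 * h + 1), eC (-∑ i, γ i * ν i) := by
  have hK : (#(haarGamma n (2 * h + 1)) : ℂ) * (1 / ((2 * h + 1 : ℕ) : ℂ) ^ n) = 1 := by
    rw [card_haarGamma_two_mul_add_one, Nat.cast_pow, mul_one_div,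
      div_self (pow_ne_zero _ (Nat.cast_ne_zero.2 (by omega)))]
  have hK2 : 1 / ((2 * h + 1 : ℕ) : ℂ) ^ (2 * n) = (1 / ((2 * h + 1 : ℕ) : ℂ) ^ n) ^ 2 := by
    rw [div_pow, one_pow, ← pow_mul, mul_comm n 2]
  rw [sum_erase _ (a := 0) (by simp [haarT, eC])]
  simp only [haarTau, haarTd, haarT, map_mul, map_sum, map_sub, map_one, map_div₀, map_pow,
    Complex.conj_natCast, hK2]
  rw [mul_sum_mul_add_sum_sub_one_mul_eq _ hK]
  congr 2 with ν
  simp only [Pi.add_apply, add_mul, sum_add_distrib, conj_eC_add_mul_eC]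

theorem sum_haarGamma_eC_neg_eq (n h : ℕ) {m : Fin n → ℤ} (hm : m ∈ haarGamma n (2 * h + 1)) :
    ∑ ν ∈ haarGamma n (2 * h + 1), eC (-∑ i, 2 * π / (2 * h + 1 : ℕ) * (m i : ℝ) * ν i) =
      if m = 0 then ((2 * h + 1 : ℕ) : ℂ) ^ n else 0 := by
  have hζ := Complex.isPrimitiveRoot_exp (2 * h + 1) (by omega)
  have hterm (ν : Fin n → ℤ) :
      eC (-∑ i, 2 * π / (2 * h + 1 : ℕ) * (m i : ℝ) * ν i) =
        ∏ i, (Complex.exp (2 * π * Complex.I / (2 * h + 1 : ℕ)) ^ m i) ^ ν i := by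
    simp only [eC, ← Complex.exp_int_mul, ← Complex.exp_sum]
    congr 1
    push_cast
    simp only [mul_neg, neg_neg, mul_sum]
    exact sum_congr rfl fun i _ => by ring
  rw [haarGamma_two_mul_add_one, Fintype.mem_piFinset] at hm
  have hdvd (i : Fin n) : ((2 * h + 1 : ℕ) : ℤ) ∣ m i ↔ m i = 0 := by
    refine ⟨fun hd => Int.eq_zero_of_abs_lt_dvd hd ?_, fun h0 => h0 ▸ dvd_zero _⟩
    have := mem_Icc.1 (hm i); rw [abs_lt]; omega
  rw [sum_congr rfl fun ν _ => hterm ν, haarGamma_two_mul_add_one, sum_prod_piFinset]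
  simp only [hζ.sum_Icc_zpow_zpow, hdvd, prod_ite_zero, prod_const, card_univ, Fintype.card_fin,
    mem_univ, true_implies, funext_iff, Pi.zero_apply]
  push_cast; rfl

theorem haar_combined_biorthogonal_masks_general
    (p : ℕ) (hp : p.Prime) (hodd : p ≠ 2) (n : ℕ) :
    ∀ ω : Fin n → ℝ, ∀ γ ∈ haarGammaStar n p,
      (starRingEnd ℂ) (haarTau n p (ω + γ)) * haarTau n p ω +
        ∑ ν ∈ (haarGamma n p).erase 0,
          (starRingEnd ℂ) (haarT n p ν (ω + γ)) * haarTd n p ν ω =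
      if γ = 0 then 1 else 0 := by
  intro ω γ hγ
  obtain ⟨h, rfl⟩ := hp.odd_of_ne_two hodd
  obtain ⟨m, hm, rfl⟩ := mem_image.1 hγ
  have hγ0 : (fun i => 2 * π / (2 * h + 1 : ℕ) * (m i : ℝ)) = 0 ↔ m = 0 := by
    simp [funext_iff, Real.pi_ne_zero, (by positivity : (2 * h + 1 : ℝ) ≠ 0)]
  rw [haar_mask_sum_eq, sum_haarGamma_eC_neg_eq n h hm]
  by_cases h0 : m = 0
  · rw [if_pos h0, if_pos (hγ0.2 h0),
      one_div_mul_cancel (pow_ne_zero _ (Nat.cast_ne_zero.2 (by omega)))]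
  · rw [if_neg h0, if_neg (mt hγ0.1 h0), mul_zero]

/-- **Example 4: the centered `n`-D Haar combined biorthogonal masks with odd prime
dilation `p`.**  The masks `τ = τᵈ`, `t_ν`, `t_νᵈ` form `n`-D combined biorthogonal
masks with dilation `p·Iₙ`. -/
theorem haar_combined_biorthogonal_masks
    (p : ℕ) (hp : p.Prime) (hodd : p ≠ 2) (n : ℕ) (hn : 2 ≤ n) :
    ∀ ω : Fin n → ℝ, ∀ γ ∈ haarGammaStar n p,
      (starRingEnd ℂ) (haarTau n p (ω + γ)) * haarTau n p ω +
        ∑ ν ∈ (haarGamma n p).erase 0,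
          (starRingEnd ℂ) (haarT n p ν (ω + γ)) * haarTd n p ν ω =
      if γ = 0 then 1 else 0 :=
  haar_combined_biorthogonal_masks_general p hp hodd n
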